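/- For the recursively defined sequences S_1 = 0001000 and S_{m+1} = S_m[0, m+3] · ¬S_m[m+4] · S_m[m+2, 3m+3], for all m ≥ 1 it holds that S_m[m+1] = S_m[m+4] and (S_m[m+2], S_m[m+3], ¬S_m[m+4]) equals either (1,0,1) or (0,1,0). -/
import Mathlib


/-- The recursively defined sequences: `S_1 = 0001000` and
`S_{m+1} = S_m[0, m+3] · ¬S_m[m+4] · S_m[m+2, 3m+3]`. -/
def Sseq : ℕ → List Bool
  | 0 => []
  | 1 => [false, false, false, true, false, false, false]
  | (m + 2) =>
      let p := Sseq (m + 1)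
      p.take ((m + 1) + 4) ++ [!(p.getD ((m + 1) + 4) false)] ++ p.drop ((m + 1) + 2)

lemma Sseq_length (m : ℕ) : (Sseq (m + 1)).length = 3 * m + 7 := by
  induction m with
  | zero => rfl
  | succ n ih =>
    show (Sseq (n + 2)).length = _
    rw [show Sseq (n + 2) = (Sseq (n+1)).take ((n + 1) + 4) ++
      [!((Sseq (n+1)).getD ((n + 1) + 4) false)] ++ (Sseq (n+1)).drop ((n + 1) + 2) from rfl]
    simp [ih]
    omega

lemma Sseq_parts (m : ℕ) :
    Sseq (m + 2) = ((Sseq (m+1)).take (m + 5) ++ [!((Sseq (m+1)).getD (m + 5) false)]) ++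
      (Sseq (m+1)).drop (m + 3) := by
  rw [show Sseq (m + 2) = (Sseq (m+1)).take ((m + 1) + 4) ++
    [!((Sseq (m+1)).getD ((m + 1) + 4) false)] ++ (Sseq (m+1)).drop ((m + 1) + 2) from rfl]

lemma Sseq_len1 (m : ℕ) : ((Sseq (m+1)).take (m + 5)).length = m + 5 := by
  simp [Sseq_length m]; omega

lemma Sseq_len2 (m : ℕ) :
    ((Sseq (m+1)).take (m + 5) ++ [!((Sseq (m+1)).getD (m + 5) false)]).length = m + 6 := by
  simp [Sseq_len1 m]

lemma Sseq_step (m : ℕ) (i : ℕ) (hi : i ≤ m + 4) :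
    (Sseq (m + 2)).getD i false = (Sseq (m + 1)).getD i false := by
  rw [Sseq_parts m, List.getD_eq_getElem?_getD, List.getElem?_append, Sseq_len2 m,
    if_pos (by omega), List.getElem?_append, Sseq_len1 m, if_pos (by omega),
    List.getElem?_take, if_pos (by omega), List.getD_eq_getElem?_getD]

lemma Sseq_step5 (m : ℕ) :
    (Sseq (m + 2)).getD (m + 5) false = !(Sseq (m + 1)).getD (m + 5) false := by
  rw [Sseq_parts m, List.getD_eq_getElem?_getD, List.getElem?_append, Sseq_len2 m,
    if_pos (by omega), List.getElem?_append_right (by rw [Sseq_len1 m]), Sseq_len1 m]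
  simp

lemma Sseq_step6 (m : ℕ) :
    (Sseq (m + 2)).getD (m + 6) false = (Sseq (m + 1)).getD (m + 3) false := by
  rw [Sseq_parts m, List.getD_eq_getElem?_getD,
    List.getElem?_append_right (by rw [Sseq_len2 m]), Sseq_len2 m,
    show m + 6 - (m + 6) = 0 from by omega, List.getElem?_drop, List.getD_eq_getElem?_getD]

/-- For all `m ≥ 1`, `S_m[m+1] = S_m[m+4]` and `(S_m[m+2], S_m[m+3], ¬S_m[m+4])` equals
either `(1,0,1)` or `(0,1,0)`. -/
theorem Sseq_structure (m : ℕ) (hm : 1 ≤ m) :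
    (Sseq m).getD (m + 1) false = (Sseq m).getD (m + 4) false ∧
    (((Sseq m).getD (m + 2) false, (Sseq m).getD (m + 3) false, !(Sseq m).getD (m + 4) false)
        = (true, false, true) ∨
     ((Sseq m).getD (m + 2) false, (Sseq m).getD (m + 3) false, !(Sseq m).getD (m + 4) false)
        = (false, true, false)) := by
  induction m with
  | zero => omega
  | succ n ih =>
    rcases Nat.eq_or_lt_of_le hm with h | h
    · rw [← h]; decide
    · have hn : 1 ≤ n := by omega
      obtain ⟨ih1, ih2⟩ := ih hn
      obtain ⟨n', rfl⟩ : ∃ n', n = n' + 1 := ⟨n - 1, by omega⟩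
      have s2 := Sseq_step n' (n' + 3) (by omega)
      have s3 := Sseq_step n' (n' + 4) (by omega)
      have s5 := Sseq_step5 n'
      have s6 := Sseq_step6 n'
      constructor
      · show (Sseq (n' + 2)).getD (n' + 3) false = (Sseq (n' + 2)).getD (n' + 6) false
        rw [s2, s6]
      · show _ ∨ _
        rw [show n' + 1 + 1 + 2 = n' + 4 from rfl, show n' + 1 + 1 + 3 = n' + 5 from rfl,
          show n' + 1 + 1 + 4 = n' + 6 from rfl, s3, s5, s6]
        rcases ih2 with h2 | h2 <;> simp_all
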